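/- arXiv:math/0101246 — 3 statements merged into one kernel-verified Lean document; each statement's English description precedes it below -/
import Mathlib

section
/- Let h ∈ ℂ[x₀,…,xₙ] be a homogeneous polynomial of degree d, and let v: ℂ^{n+1} → ℂ^N be the Veronese map of degree e sending x to all monomials of degree e in x. Let X = h⁻¹(1) and Y = v(X). Then v restricted to X is an unramified covering of Y of degree c = gcd(d, e); that is, for every y ∈ Y the fiber v⁻¹(y) ∩ X has exactly c elements, namely v(x) = v(x') for x, x' ∈ X if and only if x' = u·x with u^c = 1. -/
open MvPolynomial Finset

theorem aux_eval_smul_hom (k d : ℕ) (h : MvPolynomial (Fin k) ℂ) (hh : h.IsHomogeneous d)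
    (c : ℂ) (x : Fin k → ℂ) : MvPolynomial.eval (c • x) h = c ^ d * MvPolynomial.eval x h := by
  rw [eval_eq', eval_eq', Finset.mul_sum]
  refine Finset.sum_congr rfl fun m hm => ?_
  have hdeg : ∑ i, m i = d := by
    have := hh (MvPolynomial.mem_support_iff.mp hm)
    simpa [Finsupp.weight, Finsupp.linearCombination, Finsupp.sum_fintype] using this
  have key : ∏ i, (c • x) i ^ m i = c ^ d * ∏ i, x i ^ m i := by
    calc ∏ i, (c • x) i ^ m i = ∏ i, c ^ m i * x i ^ m i := by
          simp [Pi.smul_apply, smul_eq_mul, mul_pow]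
      _ = c ^ d * ∏ i, x i ^ m i := by
          rw [Finset.prod_mul_distrib, Finset.prod_pow_eq_pow_sum, hdeg]
  rw [key]; ring

theorem aux_prod_smul (k : ℕ) (u : ℂ) (x : Fin k → ℂ) (m : Fin k → ℕ) :
    ∏ i, (u • x) i ^ m i = u ^ (∑ i, m i) * ∏ i, x i ^ m i := by
  calc ∏ i, (u • x) i ^ m i = ∏ i, u ^ m i * x i ^ m i := by
        simp [Pi.smul_apply, smul_eq_mul, mul_pow]
    _ = _ := by rw [Finset.prod_mul_distrib, Finset.prod_pow_eq_pow_sum]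

theorem aux_key (n e : ℕ) (he : 0 < e) (x x' : Fin (n + 1) → ℂ) (i : Fin (n + 1))
    (hxi : x i ≠ 0)
    (hv : ∀ m : Fin (n + 1) → ℕ, (∑ i, m i) = e →
        (∏ i, x' i ^ m i) = ∏ i, x i ^ m i) :
    ∃ u : ℂ, u ^ e = 1 ∧ x' = u • x := by
  have h1 : x' i ^ e = x i ^ e := by
    have := hv (fun j => if j = i then e else 0) (by simp)
    rw [Finset.prod_eq_single i (fun b _ hb => by simp [hb]) (by simp),
        Finset.prod_eq_single i (fun b _ hb => by simp [hb]) (by simp)] at this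
    simpa using this
  refine ⟨x' i / x i, ?_, ?_⟩
  · rw [div_pow, h1, div_self (pow_ne_zero _ hxi)]
  have hu : x' i = (x' i / x i) * x i := by field_simp
  have hue : (x' i / x i) ^ e = 1 := by rw [div_pow, h1, div_self (pow_ne_zero _ hxi)]
  funext j
  by_cases hj : j = i
  · subst hj; simpa using hu
  · have h2 : x' i ^ (e - 1) * x' j = x i ^ (e - 1) * x j := by
      have := hv (fun k => (if k = i then e - 1 else 0) + (if k = j then 1 else 0))
        (by rw [Finset.sum_add_distrib]; simp; omega)
      have prodeq : ∀ y : Fin (n + 1) → ℂ,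
          (∏ k, y k ^ ((if k = i then e - 1 else 0) + (if k = j then 1 else 0)))
            = y i ^ (e - 1) * y j := by
        intro y
        simp only [pow_add]
        rw [Finset.prod_mul_distrib,
          Finset.prod_eq_single i (fun b _ hb => by simp [hb]) (by simp),
          Finset.prod_eq_single j (fun b _ hb => by simp [hb]) (by simp)]
        simp [hj, Ne.symm hj]
      rw [prodeq, prodeq] at this
      exact this
    set u := x' i / x i with hudef
    have hxine : x i ^ (e - 1) ≠ 0 := pow_ne_zero _ hxi
    have h3 : u ^ (e - 1) * x' j = x j := by
      have : (u ^ (e - 1) * x' j) * x i ^ (e - 1) = x j * x i ^ (e - 1) := by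
        have : (u * x i) ^ (e - 1) * x' j = x i ^ (e - 1) * x j := by
          rw [← hu]; exact h2
        rw [mul_pow] at this; linear_combination this
      exact mul_right_cancel₀ hxine this
    have : u * (u ^ (e - 1) * x' j) = u * x j := by rw [h3]
    rw [← mul_assoc, ← pow_succ'] at this
    have he1 : e - 1 + 1 = e := by omega
    rw [he1, hue, one_mul] at this
    simp [Pi.smul_apply, smul_eq_mul, this]


open Finset in
/-- Let `h ∈ ℂ[x₀,…,xₙ]` be homogeneous of degree `d > 0`, let
`v` be the Veronese map of degree `e > 0` (recording all monomials of degree `e`),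
and let `X = h⁻¹(1)`.  Then `v|X` is an unramified covering of `v(X)` of degree
`c = gcd(d, e)`: for `x, x' ∈ X` one has `v(x) = v(x')` iff `x' = u • x` with
`u^c = 1`; in particular every fiber of `v|X` has exactly `c` elements. -/
theorem stmt_0 (n d e : ℕ) (hd : 0 < d) (he : 0 < e)
    (h : MvPolynomial (Fin (n + 1)) ℂ) (hh : h.IsHomogeneous d)
    (x : Fin (n + 1) → ℂ) (hx : MvPolynomial.eval x h = 1) :
    (∀ x' : Fin (n + 1) → ℂ, MvPolynomial.eval x' h = 1 →
      ((∀ m : Fin (n + 1) → ℕ, (∑ i, m i) = e →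
          (∏ i, x' i ^ m i) = ∏ i, x i ^ m i) ↔
        ∃ u : ℂ, u ^ Nat.gcd d e = 1 ∧ x' = u • x)) ∧
    Nat.card {x' : Fin (n + 1) → ℂ //
        MvPolynomial.eval x' h = 1 ∧
          ∀ m : Fin (n + 1) → ℕ, (∑ i, m i) = e →
            (∏ i, x' i ^ m i) = ∏ i, x i ^ m i} = Nat.gcd d e := by
  set c := Nat.gcd d e with hcdef
  have hc : 0 < c := Nat.gcd_pos_of_pos_left e hd
  -- x ≠ 0
  obtain ⟨i, hxi⟩ : ∃ i, x i ≠ 0 := by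
    by_contra h0
    push_neg at h0
    have hx0 : x = (0 : ℂ) • x := funext fun i => by simp [h0 i]
    rw [hx0, aux_eval_smul_hom n.succ d h hh, zero_pow hd.ne', zero_mul] at hx
    exact one_ne_zero hx.symm
  -- backward direction
  have back : ∀ u : ℂ, u ^ c = 1 →
      MvPolynomial.eval (u • x) h = 1 ∧
        ∀ m : Fin (n + 1) → ℕ, (∑ i, m i) = e →
          (∏ i, (u • x) i ^ m i) = ∏ i, x i ^ m i := by
    intro u hu
    obtain ⟨kd, hkd⟩ := Nat.gcd_dvd_left d e
    obtain ⟨ke, hke⟩ := Nat.gcd_dvd_right d e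
    have hud : u ^ d = 1 := by rw [hkd, pow_mul, hu, one_pow]
    have hue : u ^ e = 1 := by rw [hke, pow_mul, hu, one_pow]
    constructor
    · rw [aux_eval_smul_hom n.succ d h hh, hud, hx, one_mul]
    · intro m hm
      rw [aux_prod_smul, hm, hue, one_mul]
  -- forward direction
  have fwd : ∀ x' : Fin (n + 1) → ℂ, MvPolynomial.eval x' h = 1 →
      (∀ m : Fin (n + 1) → ℕ, (∑ i, m i) = e →
          (∏ i, x' i ^ m i) = ∏ i, x i ^ m i) →
      ∃ u : ℂ, u ^ c = 1 ∧ x' = u • x := by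
    intro x' hx' hv
    obtain ⟨u, hue, hxu⟩ := aux_key n e he x x' i hxi hv
    have hud : u ^ d = 1 := by
      rw [hxu, aux_eval_smul_hom n.succ d h hh, hx, mul_one] at hx'
      exact hx'
    refine ⟨u, ?_, hxu⟩
    have h1 : orderOf u ∣ d := orderOf_dvd_of_pow_eq_one hud
    have h2 : orderOf u ∣ e := orderOf_dvd_of_pow_eq_one hue
    exact orderOf_dvd_iff_pow_eq_one.mp (Nat.dvd_gcd h1 h2)
  refine ⟨fun x' hx' => ⟨fwd x' hx', ?_⟩, ?_⟩
  · rintro ⟨u, hu, rfl⟩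
    exact (back u hu).2
  · have hbij : Function.Bijective
        (fun u : {u : ℂ // u ^ c = 1} =>
          (⟨u.1 • x, (back u.1 u.2).1, (back u.1 u.2).2⟩ :
            {x' : Fin (n + 1) → ℂ //
              MvPolynomial.eval x' h = 1 ∧
                ∀ m : Fin (n + 1) → ℕ, (∑ i, m i) = e →
                  (∏ i, x' i ^ m i) = ∏ i, x i ^ m i})) := by
      constructor
      · rintro ⟨u, hu⟩ ⟨u', hu'⟩ huu
        have : u • x = u' • x := congrArg Subtype.val huu
        have := congrFun this i
        simp only [Pi.smul_apply, smul_eq_mul] at this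
        exact Subtype.ext (mul_right_cancel₀ hxi this)
      · rintro ⟨x', hx', hv⟩
        obtain ⟨u, hu, rfl⟩ := fwd x' hx' hv
        exact ⟨⟨u, hu⟩, rfl⟩
    rw [← Nat.card_eq_of_bijective _ hbij]
    have equiv2 : {u : ℂ // u ^ c = 1} ≃ (Polynomial.nthRootsFinset c (1 : ℂ)) :=
      Equiv.subtypeEquivRight fun u => (Polynomial.mem_nthRootsFinset hc (1 : ℂ)).symm
    rw [Nat.card_congr equiv2, Nat.card_eq_fintype_card, Fintype.card_coe,
      (Complex.isPrimitiveRoot_exp c hc.ne').card_nthRootsFinset]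
end

section
/- Let U* be a connected graded algebra of finite type over a field K that is Koszul, and let A* be a graded retract of U* (i.e., there are graded algebra maps i: A → U and r: U → A with r∘i = id). Then A* is Koszul. -/
open Finset

/-- A minimal *linear* free resolution of the trivial module `K` over a connected
graded `K`-algebra `A`:
`⋯ → A^{b₂} → A^{b₁} → A^{b₀} = A → K → 0`, acyclic, with all differentials given by
matrices with entries in `𝒜 1`.  For a connected graded algebra of finite type, the
existence of such a resolution is equivalent to Koszulness
(`Tor^A_{s,t}(K,K) = 0` for `s ≠ t`). -/
def HasLinearResolutionOfK {K A : Type} [Field K] [Ring A] [Algebra K A]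
    (𝒜 : ℕ → Submodule K A) (χ : A →ₐ[K] K) : Prop :=
  ∃ (b : ℕ → ℕ) (d : ∀ q : ℕ, ((Fin (b (q + 1)) → A) →ₗ[A] (Fin (b q) → A))),
    b 0 = 1 ∧
    (∀ q v, d q (d (q + 1) v) = 0) ∧
    (∀ q v, d q v = 0 → ∃ w, d (q + 1) w = v) ∧
    (∀ v : Fin (b 0) → A, (∃ w, d 0 w = v) ↔ ∀ j, χ (v j) = 0) ∧
    (∀ q, ∃ M : Matrix (Fin (b q)) (Fin (b (q + 1))) A,
      (∀ p r, M p r ∈ 𝒜 1) ∧ ∀ v p, d q v p = ∑ r, v r * M p r)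

set_option linter.unusedSectionVars false

namespace Stmt11Aux

variable {K U A : Type} [Field K] [Ring U] [Algebra K U] [Ring A] [Algebra K A]

/-- Uniform "kernel predicate" along the `U`-resolution (level 0 is the augmentation). -/
def KU (χU : U →ₐ[K] K) (bU : ℕ → ℕ)
    (D : ∀ q : ℕ, (Fin (bU (q+1)) → U) →ₗ[U] (Fin (bU q) → U)) :
    ∀ q : ℕ, (Fin (bU q) → U) → Prop
  | 0 => fun u => ∀ j, χU (u j) = 0
  | (q+1) => fun u => D q u = 0

/-- The state carried along the inductive construction: the rank `c` at level `q`,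
the kernel of the previous differential, and scalar matrices `S`, `T` realizing the
retraction between the two complexes at this level. -/
structure St (χU : U →ₐ[K] K) (i : A →ₐ[K] U) (r : U →ₐ[K] A) (bU : ℕ → ℕ)
    (D : ∀ q : ℕ, (Fin (bU (q+1)) → U) →ₗ[U] (Fin (bU q) → U)) (q : ℕ) where
  c : ℕ
  ker : Submodule A (Fin c → A)
  S : Matrix (Fin c) (Fin (bU q)) K
  T : Matrix (Fin (bU q)) (Fin c) K
  hST : S * T = 1
  hpsi : ∀ u : Fin (bU q) → U, KU χU bU D q u → (fun p => ∑ k, S p k • r (u k)) ∈ ker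
  hphi : ∀ v, v ∈ ker → KU χU bU D q (fun j => ∑ l, T j l • i (v l))

section Graded

variable (𝒰 : ℕ → Submodule K U) [GradedAlgebra 𝒰]

lemma pr_mem_same {t : ℕ} {x : U} (h : x ∈ 𝒰 t) : GradedRing.proj 𝒰 t x = x := by
  rw [GradedRing.proj_apply, DirectSum.decompose_of_mem_same 𝒰 h]

lemma pr_mem_ne {t t' : ℕ} {x : U} (h : x ∈ 𝒰 t) (ht : t ≠ t') :
    GradedRing.proj 𝒰 t' x = 0 := by
  rw [GradedRing.proj_apply, DirectSum.decompose_of_mem_ne 𝒰 h ht]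

lemma pr_mul_deg1 (w m : U) (hm : m ∈ 𝒰 1) :
    GradedRing.proj 𝒰 1 (w * m) = GradedRing.proj 𝒰 0 w * m := by
  induction w using DirectSum.Decomposition.inductionOn 𝒰 with
  | zero => simp
  | @homogeneous t x =>
    cases t with
    | zero =>
      have hx : (x : U) * m ∈ 𝒰 1 := by
        simpa using SetLike.mul_mem_graded x.2 hm
      rw [pr_mem_same 𝒰 hx, pr_mem_same 𝒰 x.2]
    | succ t =>
      have hx : (x : U) * m ∈ 𝒰 (t + 1 + 1) := SetLike.mul_mem_graded x.2 hm
      rw [pr_mem_ne 𝒰 hx (by omega), pr_mem_ne 𝒰 x.2 (by omega), zero_mul]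
  | add a b ha hb => rw [add_mul, map_add, ha, hb, map_add, add_mul]

lemma pr_zero_scalar (hconnU : 𝒰 0 = (1 : Submodule K U)) (w : U) :
    ∃ c : K, GradedRing.proj 𝒰 0 w = algebraMap K U c := by
  have h : GradedRing.proj 𝒰 0 w ∈ 𝒰 0 := by
    rw [GradedRing.proj_apply]; exact SetLike.coe_mem _
  rw [hconnU] at h
  obtain ⟨c, hc⟩ := Submodule.mem_one.mp h
  exact ⟨c, hc.symm⟩

end Graded

section ChiComp

variable (𝒰 : ℕ → Submodule K U) [GradedAlgebra 𝒰]
variable (𝒜 : ℕ → Submodule K A) [GradedAlgebra 𝒜]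
variable (χU : U →ₐ[K] K) (χA : A →ₐ[K] K)

lemma chiA_r (hconnU : 𝒰 0 = (1 : Submodule K U))
    (hχU : ∀ t, ∀ a ∈ 𝒰 (t + 1), χU a = 0) (hχA : ∀ t, ∀ a ∈ 𝒜 (t + 1), χA a = 0)
    (r : U →ₐ[K] A) (hr : ∀ s, ∀ u ∈ 𝒰 s, r u ∈ 𝒜 s) (u : U) :
    χA (r u) = χU u := by
  induction u using DirectSum.Decomposition.inductionOn 𝒰 with
  | zero => simp
  | @homogeneous t x =>
    cases t with
    | zero =>
      have hx : (x : U) ∈ (1 : Submodule K U) := hconnU ▸ x.2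
      obtain ⟨c, hc⟩ := Submodule.mem_one.mp hx
      rw [← hc, AlgHom.commutes, AlgHom.commutes, AlgHom.commutes]
    | succ t =>
      rw [hχU t _ x.2, hχA t _ (hr _ _ x.2)]
  | add a b ha hb => rw [map_add, map_add, map_add, ha, hb]

lemma chiU_i (hconnA : 𝒜 0 = (1 : Submodule K A))
    (hχU : ∀ t, ∀ a ∈ 𝒰 (t + 1), χU a = 0) (hχA : ∀ t, ∀ a ∈ 𝒜 (t + 1), χA a = 0)
    (i : A →ₐ[K] U) (hi : ∀ s, ∀ a ∈ 𝒜 s, i a ∈ 𝒰 s) (a : A) :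
    χU (i a) = χA a := by
  induction a using DirectSum.Decomposition.inductionOn 𝒜 with
  | zero => simp
  | @homogeneous t x =>
    cases t with
    | zero =>
      have hx : (x : A) ∈ (1 : Submodule K A) := hconnA ▸ x.2
      obtain ⟨c, hc⟩ := Submodule.mem_one.mp hx
      rw [← hc, AlgHom.commutes, AlgHom.commutes, AlgHom.commutes]
    | succ t =>
      rw [hχA t _ x.2, hχU t _ (hi _ _ x.2)]
  | add a b ha hb => rw [map_add, map_add, map_add, ha, hb]

end ChiComp


set_option linter.unusedSectionVars false
section Main

variable (𝒰 : ℕ → Submodule K U) [GradedAlgebra 𝒰]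
variable (𝒜 : ℕ → Submodule K A) [∀ t, FiniteDimensional K (𝒜 t)]
variable (χU : U →ₐ[K] K) (i : A →ₐ[K] U) (r : U →ₐ[K] A)
variable (bU : ℕ → ℕ) (D : ∀ q : ℕ, (Fin (bU (q+1)) → U) →ₗ[U] (Fin (bU q) → U))
variable (M : ∀ q : ℕ, Matrix (Fin (bU q)) (Fin (bU (q+1))) U)
variable (hconnU : 𝒰 0 = (1 : Submodule K U))
variable (hi : ∀ s, ∀ a ∈ 𝒜 s, i a ∈ 𝒰 s) (hr : ∀ s, ∀ u ∈ 𝒰 s, r u ∈ 𝒜 s)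
variable (hri' : ∀ a, r (i a) = a)
variable (hMmem : ∀ q p k, M q p k ∈ 𝒰 1)
variable (hMd : ∀ q (v : Fin (bU (q+1)) → U) p, D q v p = ∑ k, v k * M q p k)
variable (hex : ∀ q u, KU χU bU D q u → ∃ w, D q w = u)
variable (hDK : ∀ q w, KU χU bU D q (D q w))

/-- Any degree-one-entried vector in the kernel is a scalar combination of the
columns of the next matrix of the `U`-resolution (gradedness of the resolution). -/
lemma grlem (hconnU : 𝒰 0 = (1 : Submodule K U))
    (hMmem : ∀ q p k, M q p k ∈ 𝒰 1)
    (hMd : ∀ q (v : Fin (bU (q+1)) → U) p, D q v p = ∑ k, v k * M q p k)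
    (hex : ∀ q u, KU χU bU D q u → ∃ w, D q w = u)
    (q : ℕ) (u : Fin (bU q) → U) (hKU : KU χU bU D q u)
    (hdeg : ∀ p, u p ∈ 𝒰 1) :
    ∃ t : Fin (bU (q+1)) → K, ∀ p, u p = ∑ k, t k • M q p k := by
  obtain ⟨w, hw⟩ := hex q u hKU
  choose c hc using fun k => pr_zero_scalar 𝒰 hconnU (w k)
  refine ⟨c, fun p => ?_⟩
  calc u p = GradedRing.proj 𝒰 1 (u p) := (pr_mem_same 𝒰 (hdeg p)).symm
    _ = GradedRing.proj 𝒰 1 (∑ k, w k * M q p k) := by rw [← hMd, hw]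
    _ = ∑ k, GradedRing.proj 𝒰 1 (w k * M q p k) := map_sum _ _ _
    _ = ∑ k, GradedRing.proj 𝒰 0 (w k) * M q p k :=
        Finset.sum_congr rfl fun k _ => pr_mul_deg1 𝒰 _ _ (hMmem q p k)
    _ = ∑ k, c k • M q p k :=
        Finset.sum_congr rfl fun k _ => by rw [hc k, Algebra.smul_def]

variable {q : ℕ}

/-- The space of degree-one-entried vectors in the kernel, over `A`. -/
def Xsub (st : St χU i r bU D q) : Submodule K (Fin st.c → A) :=
  (st.ker.restrictScalars K) ⊓ Submodule.pi Set.univ fun _ => 𝒜 1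

lemma Xsub_fd (st : St χU i r bU D q) : FiniteDimensional K (Xsub 𝒜 χU i r bU D st) := by
  let f : Xsub 𝒜 χU i r bU D st →ₗ[K] (Fin st.c → 𝒜 1) :=
    { toFun := fun x p => ⟨x.1 p, (Submodule.mem_inf.mp x.2).2 p (Set.mem_univ p)⟩
      map_add' := fun x y => rfl
      map_smul' := fun c x => rfl }
  exact FiniteDimensional.of_injective f
    (fun x y h => Subtype.ext (funext fun p => congrArg Subtype.val (congrFun h p)))

noncomputable def cN (st : St χU i r bU D q) : ℕ := Module.finrank K (Xsub 𝒜 χU i r bU D st)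

noncomputable def nb (st : St χU i r bU D q) :
    Module.Basis (Fin (cN 𝒜 χU i r bU D st)) K (Xsub 𝒜 χU i r bU D st) := by
  letI := Xsub_fd 𝒜 χU i r bU D st
  exact Module.finBasis K _

noncomputable def dMat (st : St χU i r bU D q) :
    Matrix (Fin st.c) (Fin (cN 𝒜 χU i r bU D st)) A :=
  fun p l => (nb 𝒜 χU i r bU D st l : Fin st.c → A) p

noncomputable def dLin (st : St χU i r bU D q) :
    (Fin (cN 𝒜 χU i r bU D st) → A) →ₗ[A] (Fin st.c → A) where
  toFun v := fun p => ∑ l, v l * dMat 𝒜 χU i r bU D st p l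
  map_add' v w := by
    funext p
    simp [add_mul, Finset.sum_add_distrib]
  map_smul' a v := by
    funext p
    simp [Pi.smul_apply, smul_eq_mul, Finset.mul_sum, mul_assoc]

@[simp] lemma dLin_apply (st : St χU i r bU D q) (v) (p) :
    dLin 𝒜 χU i r bU D st v p = ∑ l, v l * dMat 𝒜 χU i r bU D st p l := rfl

lemma dMat_mem (st : St χU i r bU D q) (p l) : dMat 𝒜 χU i r bU D st p l ∈ 𝒜 1 :=
  (Submodule.mem_inf.mp (nb 𝒜 χU i r bU D st l).2).2 p (Set.mem_univ p)

lemma nb_mem_ker (st : St χU i r bU D q) (l) :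
    (nb 𝒜 χU i r bU D st l : Fin st.c → A) ∈ st.ker :=
  (Submodule.mem_inf.mp (nb 𝒜 χU i r bU D st l).2).1

lemma dLin_mem_ker (st : St χU i r bU D q) (v) : dLin 𝒜 χU i r bU D st v ∈ st.ker := by
  have h : dLin 𝒜 χU i r bU D st v
      = ∑ l, v l • (nb 𝒜 χU i r bU D st l : Fin st.c → A) := by
    funext p
    rw [Finset.sum_apply, dLin_apply]
    exact Finset.sum_congr rfl fun l _ => rfl
  rw [h]
  exact Submodule.sum_mem _ fun l _ =>
    Submodule.smul_mem _ _ (nb_mem_ker 𝒜 χU i r bU D st l)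

end Main
section Step

variable (𝒰 : ℕ → Submodule K U) [GradedAlgebra 𝒰]
variable (𝒜 : ℕ → Submodule K A) [∀ t, FiniteDimensional K (𝒜 t)]
variable (χU : U →ₐ[K] K) (i : A →ₐ[K] U) (r : U →ₐ[K] A)
variable (bU : ℕ → ℕ) (D : ∀ q : ℕ, (Fin (bU (q+1)) → U) →ₗ[U] (Fin (bU q) → U))
variable (M : ∀ q : ℕ, Matrix (Fin (bU q)) (Fin (bU (q+1))) U)

/-- Bundle of hypotheses used by the inductive step. -/
structure Hyp (𝒰 : ℕ → Submodule K U) (𝒜 : ℕ → Submodule K A)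
    (χU : U →ₐ[K] K) (i : A →ₐ[K] U) (r : U →ₐ[K] A)
    (bU : ℕ → ℕ) (D : ∀ q : ℕ, (Fin (bU (q+1)) → U) →ₗ[U] (Fin (bU q) → U))
    (M : ∀ q : ℕ, Matrix (Fin (bU q)) (Fin (bU (q+1))) U) : Prop where
  hconnU : 𝒰 0 = (1 : Submodule K U)
  hi : ∀ s, ∀ a ∈ 𝒜 s, i a ∈ 𝒰 s
  hr : ∀ s, ∀ u ∈ 𝒰 s, r u ∈ 𝒜 s
  hri' : ∀ a, r (i a) = a
  hMmem : ∀ q p k, M q p k ∈ 𝒰 1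
  hMd : ∀ q (v : Fin (bU (q+1)) → U) p, D q v p = ∑ k, v k * M q p k
  hex : ∀ q u, KU χU bU D q u → ∃ w, D q w = u
  hDK : ∀ q w, KU χU bU D q (D q w)

variable {q : ℕ}

lemma Mcol_KU (H : Hyp 𝒰 𝒜 χU i r bU D M) (q : ℕ) (k : Fin (bU (q+1))) :
    KU χU bU D q (fun p => M q p k) := by
  have h : (fun p => M q p k) = D q (Pi.single k 1) := by
    funext p
    rw [H.hMd]
    rw [Finset.sum_eq_single k]
    · simp
    · intro k' _ hk'; simp [Pi.single_eq_of_ne hk']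
    · intro h; exact absurd (Finset.mem_univ k) h
  rw [h]; exact H.hDK q _

def psiCol (st : St χU i r bU D q) (k : Fin (bU (q+1))) : Fin st.c → A :=
  fun p => ∑ j, st.S p j • r (M q j k)

lemma psiCol_memX (H : Hyp 𝒰 𝒜 χU i r bU D M) (st : St χU i r bU D q) (k : Fin (bU (q+1))) :
    psiCol χU i r bU D M st k ∈ Xsub 𝒜 χU i r bU D st := by
  refine Submodule.mem_inf.mpr ⟨?_, ?_⟩
  · exact st.hpsi (fun p => M q p k) (Mcol_KU 𝒰 𝒜 χU i r bU D M H q k)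
  · exact Submodule.mem_pi.mpr fun p _ => Submodule.sum_mem _ fun j _ =>
      Submodule.smul_mem _ _ (H.hr 1 _ (H.hMmem q j k))

noncomputable def xelt (H : Hyp 𝒰 𝒜 χU i r bU D M) (st : St χU i r bU D q)
    (k : Fin (bU (q+1))) : Xsub 𝒜 χU i r bU D st :=
  ⟨psiCol χU i r bU D M st k, psiCol_memX 𝒰 𝒜 χU i r bU D M H st k⟩

noncomputable def SN (H : Hyp 𝒰 𝒜 χU i r bU D M) (st : St χU i r bU D q) :
    Matrix (Fin (cN 𝒜 χU i r bU D st)) (Fin (bU (q+1))) K :=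
  fun l k => (nb 𝒜 χU i r bU D st).repr (xelt 𝒰 𝒜 χU i r bU D M H st k) l

lemma SN_sum (H : Hyp 𝒰 𝒜 χU i r bU D M) (st : St χU i r bU D q) (k : Fin (bU (q+1))) (p) :
    ∑ l, SN 𝒰 𝒜 χU i r bU D M H st l k • dMat 𝒜 χU i r bU D st p l
      = psiCol χU i r bU D M st k p := by
  have h := congrArg Subtype.val
    ((nb 𝒜 χU i r bU D st).sum_repr (xelt 𝒰 𝒜 χU i r bU D M H st k))
  have h2 := congrFun h p
  simp only [AddSubmonoidClass.coe_finset_sum, Finset.sum_apply, SetLike.val_smul,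
    Pi.smul_apply] at h2
  exact h2

lemma phiCol_ex (H : Hyp 𝒰 𝒜 χU i r bU D M) (st : St χU i r bU D q)
    (l : Fin (cN 𝒜 χU i r bU D st)) :
    ∃ t : Fin (bU (q+1)) → K, ∀ p,
      (∑ j, st.T p j • i (dMat 𝒜 χU i r bU D st j l)) = ∑ k, t k • M q p k := by
  refine grlem 𝒰 χU bU D M H.hconnU H.hMmem H.hMd H.hex q _ ?_ ?_
  · exact st.hphi _ (nb_mem_ker 𝒜 χU i r bU D st l)
  · intro p
    exact Submodule.sum_mem _ fun j _ =>
      Submodule.smul_mem _ _ (H.hi 1 _ (dMat_mem 𝒜 χU i r bU D st j l))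

noncomputable def TN (H : Hyp 𝒰 𝒜 χU i r bU D M) (st : St χU i r bU D q) :
    Matrix (Fin (bU (q+1))) (Fin (cN 𝒜 χU i r bU D st)) K :=
  fun k l => (phiCol_ex 𝒰 𝒜 χU i r bU D M H st l).choose k

lemma TN_spec (H : Hyp 𝒰 𝒜 χU i r bU D M) (st : St χU i r bU D q)
    (l : Fin (cN 𝒜 χU i r bU D st)) (p) :
    (∑ j, st.T p j • i (dMat 𝒜 χU i r bU D st j l))
      = ∑ k, TN 𝒰 𝒜 χU i r bU D M H st k l • M q p k :=
  (phiCol_ex 𝒰 𝒜 χU i r bU D M H st l).choose_spec p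

end Step
section Step2

variable (𝒰 : ℕ → Submodule K U) [GradedAlgebra 𝒰]
variable (𝒜 : ℕ → Submodule K A) [∀ t, FiniteDimensional K (𝒜 t)]
variable (χU : U →ₐ[K] K) (χA : A →ₐ[K] K) (i : A →ₐ[K] U) (r : U →ₐ[K] A)
variable (bU : ℕ → ℕ) (D : ∀ q : ℕ, (Fin (bU (q+1)) → U) →ₗ[U] (Fin (bU q) → U))
variable (M : ∀ q : ℕ, Matrix (Fin (bU q)) (Fin (bU (q+1))) U)
variable {q : ℕ}

lemma ST_collapse (st : St χU i r bU D q) (x : Fin st.c → A) (p) :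
    ∑ j, st.S p j • ∑ l, st.T j l • x l = x p := by
  calc ∑ j, st.S p j • ∑ l, st.T j l • x l
      = ∑ j, ∑ l, (st.S p j * st.T j l) • x l := by
        refine Finset.sum_congr rfl fun j _ => ?_
        rw [Finset.smul_sum]
        exact Finset.sum_congr rfl fun l _ => smul_smul _ _ _
    _ = ∑ l, ∑ j, (st.S p j * st.T j l) • x l := Finset.sum_comm
    _ = ∑ l, (st.S * st.T) p l • x l := by
        refine Finset.sum_congr rfl fun l _ => ?_
        rw [Matrix.mul_apply, Finset.sum_smul]
    _ = x p := by
        rw [st.hST]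
        simp [Matrix.one_apply, ite_smul]

lemma retract_id (hri' : ∀ a, r (i a) = a) (st : St χU i r bU D q) (v : Fin st.c → A) :
    (fun p => ∑ j, st.S p j • r (∑ l, st.T j l • i (v l))) = v := by
  funext p
  have h1 : ∀ j, r (∑ l, st.T j l • i (v l)) = ∑ l, st.T j l • v l := by
    intro j
    rw [map_sum]
    exact Finset.sum_congr rfl fun l _ => by rw [map_smul, hri']
  simp only [h1]
  exact ST_collapse χU i r bU D st v p

lemma chain_psi (H : Hyp 𝒰 𝒜 χU i r bU D M) (st : St χU i r bU D q)
    (u : Fin (bU (q+1)) → U) :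
    dLin 𝒜 χU i r bU D st (fun p => ∑ k, SN 𝒰 𝒜 χU i r bU D M H st p k • r (u k))
      = fun p => ∑ j, st.S p j • r (D q u j) := by
  funext p
  have e1 : dLin 𝒜 χU i r bU D st
        (fun p' => ∑ k, SN 𝒰 𝒜 χU i r bU D M H st p' k • r (u k)) p
      = ∑ k, r (u k) * psiCol χU i r bU D M st k p := by
    rw [dLin_apply]
    calc ∑ l, (∑ k, SN 𝒰 𝒜 χU i r bU D M H st l k • r (u k)) * dMat 𝒜 χU i r bU D st p l
        = ∑ l, ∑ k, SN 𝒰 𝒜 χU i r bU D M H st l k • (r (u k) * dMat 𝒜 χU i r bU D st p l) := by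
          refine Finset.sum_congr rfl fun l _ => ?_
          rw [Finset.sum_mul]
          exact Finset.sum_congr rfl fun k _ => smul_mul_assoc _ _ _
      _ = ∑ k, ∑ l, SN 𝒰 𝒜 χU i r bU D M H st l k • (r (u k) * dMat 𝒜 χU i r bU D st p l) :=
          Finset.sum_comm
      _ = ∑ k, r (u k) * ∑ l, SN 𝒰 𝒜 χU i r bU D M H st l k • dMat 𝒜 χU i r bU D st p l := by
          refine Finset.sum_congr rfl fun k _ => ?_
          rw [Finset.mul_sum]
          exact Finset.sum_congr rfl fun l _ => (mul_smul_comm _ _ _).symm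
      _ = ∑ k, r (u k) * psiCol χU i r bU D M st k p :=
          Finset.sum_congr rfl fun k _ => by rw [SN_sum 𝒰 𝒜 χU i r bU D M H st k p]
  have e2 : ∑ j, st.S p j • r (D q u j)
      = ∑ k, r (u k) * psiCol χU i r bU D M st k p := by
    calc ∑ j, st.S p j • r (D q u j)
        = ∑ j, ∑ k, st.S p j • (r (u k) * r (M q j k)) := by
          refine Finset.sum_congr rfl fun j _ => ?_
          rw [H.hMd, map_sum, Finset.smul_sum]
          exact Finset.sum_congr rfl fun k _ => by rw [map_mul]
      _ = ∑ k, ∑ j, st.S p j • (r (u k) * r (M q j k)) := Finset.sum_comm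
      _ = ∑ k, r (u k) * ∑ j, st.S p j • r (M q j k) := by
          refine Finset.sum_congr rfl fun k _ => ?_
          rw [Finset.mul_sum]
          exact Finset.sum_congr rfl fun j _ => (mul_smul_comm _ _ _).symm
      _ = ∑ k, r (u k) * psiCol χU i r bU D M st k p := rfl
  rw [e1, e2]

lemma chain_phi (H : Hyp 𝒰 𝒜 χU i r bU D M) (st : St χU i r bU D q)
    (v : Fin (cN 𝒜 χU i r bU D st) → A) :
    D q (fun j => ∑ l, TN 𝒰 𝒜 χU i r bU D M H st j l • i (v l))
      = fun p => ∑ j, st.T p j • i (dLin 𝒜 χU i r bU D st v j) := by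
  funext p
  have e1 : D q (fun j => ∑ l, TN 𝒰 𝒜 χU i r bU D M H st j l • i (v l)) p
      = ∑ l, i (v l) * ∑ j, st.T p j • i (dMat 𝒜 χU i r bU D st j l) := by
    rw [H.hMd]
    calc ∑ k, (∑ l, TN 𝒰 𝒜 χU i r bU D M H st k l • i (v l)) * M q p k
        = ∑ k, ∑ l, TN 𝒰 𝒜 χU i r bU D M H st k l • (i (v l) * M q p k) := by
          refine Finset.sum_congr rfl fun k _ => ?_
          rw [Finset.sum_mul]
          exact Finset.sum_congr rfl fun l _ => smul_mul_assoc _ _ _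
      _ = ∑ l, ∑ k, TN 𝒰 𝒜 χU i r bU D M H st k l • (i (v l) * M q p k) := Finset.sum_comm
      _ = ∑ l, i (v l) * ∑ k, TN 𝒰 𝒜 χU i r bU D M H st k l • M q p k := by
          refine Finset.sum_congr rfl fun l _ => ?_
          rw [Finset.mul_sum]
          exact Finset.sum_congr rfl fun k _ => (mul_smul_comm _ _ _).symm
      _ = ∑ l, i (v l) * ∑ j, st.T p j • i (dMat 𝒜 χU i r bU D st j l) :=
          Finset.sum_congr rfl fun l _ => by rw [TN_spec 𝒰 𝒜 χU i r bU D M H st l p]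
  have e2 : ∑ j, st.T p j • i (dLin 𝒜 χU i r bU D st v j)
      = ∑ l, i (v l) * ∑ j, st.T p j • i (dMat 𝒜 χU i r bU D st j l) := by
    calc ∑ j, st.T p j • i (dLin 𝒜 χU i r bU D st v j)
        = ∑ j, ∑ l, st.T p j • (i (v l) * i (dMat 𝒜 χU i r bU D st j l)) := by
          refine Finset.sum_congr rfl fun j _ => ?_
          rw [dLin_apply, map_sum, Finset.smul_sum]
          exact Finset.sum_congr rfl fun l _ => by rw [map_mul]
      _ = ∑ l, ∑ j, st.T p j • (i (v l) * i (dMat 𝒜 χU i r bU D st j l)) := Finset.sum_comm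
      _ = ∑ l, i (v l) * ∑ j, st.T p j • i (dMat 𝒜 χU i r bU D st j l) := by
          refine Finset.sum_congr rfl fun l _ => ?_
          rw [Finset.mul_sum]
          exact Finset.sum_congr rfl fun j _ => (mul_smul_comm _ _ _).symm
  rw [e1, e2]

lemma TN_psiCol (H : Hyp 𝒰 𝒜 χU i r bU D M) (st : St χU i r bU D q)
    (l : Fin (cN 𝒜 χU i r bU D st)) (p) :
    ∑ k, TN 𝒰 𝒜 χU i r bU D M H st k l • psiCol χU i r bU D M st k p
      = dMat 𝒜 χU i r bU D st p l := by
  calc ∑ k, TN 𝒰 𝒜 χU i r bU D M H st k l • psiCol χU i r bU D M st k p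
      = ∑ k, ∑ j, st.S p j • (TN 𝒰 𝒜 χU i r bU D M H st k l • r (M q j k)) := by
        refine Finset.sum_congr rfl fun k _ => ?_
        rw [psiCol, Finset.smul_sum]
        exact Finset.sum_congr rfl fun j _ => smul_comm _ _ _
    _ = ∑ j, ∑ k, st.S p j • (TN 𝒰 𝒜 χU i r bU D M H st k l • r (M q j k)) := Finset.sum_comm
    _ = ∑ j, st.S p j • r (∑ k, TN 𝒰 𝒜 χU i r bU D M H st k l • M q j k) := by
        refine Finset.sum_congr rfl fun j _ => ?_
        have hr1 : r (∑ k, TN 𝒰 𝒜 χU i r bU D M H st k l • M q j k)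
            = ∑ k, TN 𝒰 𝒜 χU i r bU D M H st k l • r (M q j k) := by
          rw [map_sum]
          exact Finset.sum_congr rfl fun k _ => map_smul _ _ _
        rw [hr1, Finset.smul_sum]
    _ = ∑ j, st.S p j • r (∑ j', st.T j j' • i (dMat 𝒜 χU i r bU D st j' l)) := by
        refine Finset.sum_congr rfl fun j _ => ?_
        rw [← TN_spec 𝒰 𝒜 χU i r bU D M H st l j]
    _ = ∑ j, st.S p j • ∑ j', st.T j j' • dMat 𝒜 χU i r bU D st j' l := by
        refine Finset.sum_congr rfl fun j _ => ?_
        congr 1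
        rw [map_sum]
        exact Finset.sum_congr rfl fun j' _ => by rw [map_smul, H.hri']
    _ = dMat 𝒜 χU i r bU D st p l :=
        ST_collapse χU i r bU D st (fun j' => dMat 𝒜 χU i r bU D st j' l) p

lemma SNTN (H : Hyp 𝒰 𝒜 χU i r bU D M) (st : St χU i r bU D q) :
    SN 𝒰 𝒜 χU i r bU D M H st * TN 𝒰 𝒜 χU i r bU D M H st = 1 := by
  have hE : ∀ l, (∑ k, TN 𝒰 𝒜 χU i r bU D M H st k l • xelt 𝒰 𝒜 χU i r bU D M H st k)
      = nb 𝒜 χU i r bU D st l := by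
    intro l
    apply Subtype.ext
    have hco : ((∑ k, TN 𝒰 𝒜 χU i r bU D M H st k l • xelt 𝒰 𝒜 χU i r bU D M H st k :
          Xsub 𝒜 χU i r bU D st) : Fin st.c → A)
        = fun p => ∑ k, TN 𝒰 𝒜 χU i r bU D M H st k l • psiCol χU i r bU D M st k p := by
      simp only [AddSubmonoidClass.coe_finset_sum, SetLike.val_smul, xelt]
      funext p
      rw [Finset.sum_apply]
      rfl
    rw [hco]
    funext p
    rw [TN_psiCol 𝒰 𝒜 χU i r bU D M H st l p]
    rfl
  ext l' l
  have h := congrArg ((nb 𝒜 χU i r bU D st).repr) (hE l)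
  rw [map_sum, Module.Basis.repr_self] at h
  simp only [map_smul] at h
  have h2 := DFunLike.congr_fun h l'
  simp only [Finsupp.coe_finset_sum, Finset.sum_apply, Finsupp.smul_apply, smul_eq_mul,
    Finsupp.single_apply] at h2
  rw [Matrix.mul_apply, Matrix.one_apply]
  calc ∑ k, SN 𝒰 𝒜 χU i r bU D M H st l' k * TN 𝒰 𝒜 χU i r bU D M H st k l
      = ∑ k, TN 𝒰 𝒜 χU i r bU D M H st k l * SN 𝒰 𝒜 χU i r bU D M H st l' k :=
        Finset.sum_congr rfl fun k _ => mul_comm _ _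
    _ = (if l = l' then 1 else 0) := h2
    _ = (if l' = l then 1 else 0) := by
        by_cases hll : l = l' <;> simp [hll, Ne.symm, eq_comm]

noncomputable def StNext (H : Hyp 𝒰 𝒜 χU i r bU D M) (st : St χU i r bU D q) :
    St χU i r bU D (q+1) where
  c := cN 𝒜 χU i r bU D st
  ker := LinearMap.ker (dLin 𝒜 χU i r bU D st)
  S := SN 𝒰 𝒜 χU i r bU D M H st
  T := TN 𝒰 𝒜 χU i r bU D M H st
  hST := SNTN 𝒰 𝒜 χU i r bU D M H st
  hpsi := fun u hu => by
    have hD : D q u = 0 := hu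
    refine LinearMap.mem_ker.mpr ?_
    rw [chain_psi 𝒰 𝒜 χU i r bU D M H st u, hD]
    funext p
    simp
  hphi := fun v hv => by
    show D q _ = 0
    rw [chain_phi 𝒰 𝒜 χU i r bU D M H st v, LinearMap.mem_ker.mp hv]
    funext p
    simp

lemma exact_st (H : Hyp 𝒰 𝒜 χU i r bU D M) (st : St χU i r bU D q) :
    ∀ v ∈ st.ker, ∃ w : Fin (cN 𝒜 χU i r bU D st) → A, dLin 𝒜 χU i r bU D st w = v := by
  intro v hv
  obtain ⟨wU, hwU⟩ := H.hex q _ (st.hphi v hv)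
  refine ⟨fun p => ∑ k, SN 𝒰 𝒜 χU i r bU D M H st p k • r (wU k), ?_⟩
  calc dLin 𝒜 χU i r bU D st (fun p => ∑ k, SN 𝒰 𝒜 χU i r bU D M H st p k • r (wU k))
      = fun p => ∑ j, st.S p j • r (D q wU j) := chain_psi 𝒰 𝒜 χU i r bU D M H st wU
    _ = fun p => ∑ j, st.S p j • r (∑ l, st.T j l • i (v l)) := by rw [hwU]
    _ = v := retract_id χU i r bU D H.hri' st v

noncomputable def StZero (hb0 : bU 0 = 1)
    (L1 : ∀ u, χA (r u) = χU u) (L2 : ∀ a, χU (i a) = χA a) :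
    St χU i r bU D 0 where
  c := 1
  ker :=
    { carrier := {v | ∀ j, χA (v j) = 0}
      add_mem' := fun {a b} ha hb j => by
        simp only [Pi.add_apply, map_add, ha j, hb j, add_zero]
      zero_mem' := fun j => by simp
      smul_mem' := fun a v hv j => by
        simp only [Pi.smul_apply, smul_eq_mul, map_mul, hv j, mul_zero] }
  S := fun _ _ => 1
  T := fun _ _ => 1
  hST := by
    ext p l
    have hpl : p = l := Subsingleton.elim p l
    subst hpl
    show ∑ j : Fin (bU 0), (1:K) * 1 = (1 : Matrix (Fin 1) (Fin 1) K) p p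
    simp [Matrix.mul_apply, Matrix.one_apply, Finset.card_univ, hb0]
  hpsi := fun u hu => by
    intro j
    rw [map_sum]
    calc ∑ k, χA ((1:K) • r (u k)) = ∑ k, χU (u k) := by
          refine Finset.sum_congr rfl fun k _ => ?_
          rw [one_smul, L1]
      _ = 0 := by
          refine Finset.sum_eq_zero fun k _ => hu k
  hphi := fun v hv => by
    intro j
    rw [map_sum]
    calc ∑ l, χU ((1:K) • i (v l)) = ∑ l, χA (v l) := by
          refine Finset.sum_congr rfl fun l _ => ?_
          rw [one_smul, L2]
      _ = 0 := by
          refine Finset.sum_eq_zero fun l _ => hv l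

end Step2

end Stmt11Aux

/-- Let `U` be a Koszul connected graded `K`-algebra of finite type
and let `A` be a graded retract of `U` (graded algebra maps `i : A → U`, `r : U → A`
with `r ∘ i = id`).  Then `A` is Koszul.  (Koszulness is encoded by the existence of
a linear minimal free resolution of the trivial module `K`, which for connected
graded algebras of finite type is equivalent to `Tor^U_{s,t}(K,K) = 0` for
`s ≠ t`.) -/
theorem stmt_11 {K U A : Type} [Field K] [Ring U] [Algebra K U] [Ring A] [Algebra K A]
    (𝒰 : ℕ → Submodule K U) [GradedAlgebra 𝒰] (𝒜 : ℕ → Submodule K A) [GradedAlgebra 𝒜]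
    -- connected and of finite type
    (hconnU : 𝒰 0 = (1 : Submodule K U)) (hconnA : 𝒜 0 = (1 : Submodule K A))
    [∀ i, FiniteDimensional K (𝒰 i)] [∀ i, FiniteDimensional K (𝒜 i)]
    -- the augmentations
    (χU : U →ₐ[K] K) (hχU : ∀ i, ∀ a ∈ 𝒰 (i + 1), χU a = 0)
    (χA : A →ₐ[K] K) (hχA : ∀ i, ∀ a ∈ 𝒜 (i + 1), χA a = 0)
    -- `A` is a graded retract of `U`
    (i : A →ₐ[K] U) (r : U →ₐ[K] A)
    (hi : ∀ s, ∀ a ∈ 𝒜 s, i a ∈ 𝒰 s) (hr : ∀ s, ∀ u ∈ 𝒰 s, r u ∈ 𝒜 s)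
    (hri : r.comp i = AlgHom.id K A)
    -- `U` is Koszul
    (hU : HasLinearResolutionOfK 𝒰 χU) :
    HasLinearResolutionOfK 𝒜 χA := by
  classical
  obtain ⟨bU, D, hb0, hDD, hexact, haug, hM⟩ := hU
  choose M hMmem hMd using hM
  have hri' : ∀ a, r (i a) = a := by
    intro a
    have h := DFunLike.congr_fun hri a
    simpa using h
  have hex : ∀ q u, Stmt11Aux.KU χU bU D q u → ∃ w, D q w = u := by
    intro q
    cases q with
    | zero => exact fun u hu => (haug u).mpr hu
    | succ q => exact fun u hu => hexact q u hu
  have hDK : ∀ q w, Stmt11Aux.KU χU bU D q (D q w) := by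
    intro q
    cases q with
    | zero => exact fun w => (haug (D 0 w)).mp ⟨w, rfl⟩
    | succ q => exact fun w => hDD q w
  have L1 : ∀ u, χA (r u) = χU u :=
    Stmt11Aux.chiA_r 𝒰 𝒜 χU χA hconnU hχU hχA r hr
  have L2 : ∀ a, χU (i a) = χA a :=
    Stmt11Aux.chiU_i 𝒰 𝒜 χU χA hconnA hχU hχA i hi
  have H : Stmt11Aux.Hyp 𝒰 𝒜 χU i r bU D M :=
    ⟨hconnU, hi, hr, hri', hMmem, hMd, hex, hDK⟩
  let st : ∀ q, Stmt11Aux.St χU i r bU D q := fun q =>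
    Nat.rec (Stmt11Aux.StZero χU χA i r bU D hb0 L1 L2)
      (fun q stq => Stmt11Aux.StNext 𝒰 𝒜 χU i r bU D M H stq) q
  refine ⟨fun q => (st q).c, fun q => Stmt11Aux.dLin 𝒜 χU i r bU D (st q), rfl, ?_, ?_, ?_, ?_⟩
  · intro q v
    have h := Stmt11Aux.dLin_mem_ker 𝒜 χU i r bU D (st (q+1)) v
    exact h
  · intro q v hv
    exact Stmt11Aux.exact_st 𝒰 𝒜 χU i r bU D M H (st (q+1)) v hv
  · intro v
    constructor
    · rintro ⟨w, rfl⟩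
      intro j
      exact Stmt11Aux.dLin_mem_ker 𝒜 χU i r bU D (st 0) w j
    · intro hv
      exact Stmt11Aux.exact_st 𝒰 𝒜 χU i r bU D M H (st 0) v hv
  · intro q
    exact ⟨Stmt11Aux.dMat 𝒜 χU i r bU D (st q),
      Stmt11Aux.dMat_mem 𝒜 χU i r bU D (st q), fun v p => rfl⟩
end

section
/- Let d₂,…,d_ℓ be positive integers and define β_j by Π_{i=2}^{ℓ}(1 + d_i t) = Σ_{j=0}^{ℓ−1} β_j t^j. Then for any p with 0 ≤ p ≤ ℓ−1, the power series (−1/t)^{p+1} · { 1 − [Σ_{j=0}^{p} (−1)^j β_j t^j] / Π_{i=2}^{ℓ}(1 − d_i t) } has nonnegative integer coefficients. -/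
open PowerSeries Finset

private def NNC (S : PowerSeries ℚ) : Prop :=
  ∀ n : ℕ, PowerSeries.coeff n S ∈ (Nat.castRingHom ℚ).rangeS

private lemma NNC_add {S T : PowerSeries ℚ} (hS : NNC S) (hT : NNC T) : NNC (S + T) := by
  intro n; rw [map_add]; exact add_mem (hS n) (hT n)

private lemma NNC_mul {S T : PowerSeries ℚ} (hS : NNC S) (hT : NNC T) : NNC (S * T) := by
  intro n
  rw [PowerSeries.coeff_mul]
  exact Subsemiring.sum_mem _ fun p _ => mul_mem (hS _) (hT _)

private lemma NNC_one : NNC 1 := by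
  intro n
  rw [PowerSeries.coeff_one]
  split <;> [exact one_mem _; exact zero_mem _]

private lemma NNC_C (k : ℕ) : NNC (PowerSeries.C (k : ℚ)) := by
  intro n
  rw [PowerSeries.coeff_C]
  split <;> [exact ⟨k, rfl⟩; exact zero_mem _]

private lemma NNC_prod {ι : Type*} (s : Finset ι) (f : ι → PowerSeries ℚ)
    (h : ∀ i ∈ s, NNC (f i)) : NNC (∏ i ∈ s, f i) :=
  Finset.prod_induction f NNC (fun _ _ => NNC_mul) NNC_one h

private lemma NNC_geom (c : ℕ) : NNC (PowerSeries.mk fun n => (c : ℚ) ^ n) := by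
  intro n
  rw [PowerSeries.coeff_mk]
  exact ⟨c ^ n, by push_cast; ring⟩

private lemma NNC_onePlus (c : ℕ) : NNC (1 + PowerSeries.C (c : ℚ) * PowerSeries.X) := by
  intro n
  rw [map_add, PowerSeries.coeff_one, PowerSeries.coeff_C_mul, PowerSeries.coeff_X]
  match n with
  | 0 => simpa using one_mem _
  | 1 => simpa using ⟨c, rfl⟩
  | n + 2 => simpa using zero_mem _

private lemma geom_inv (c : ℕ) :
    (1 - PowerSeries.C (c : ℚ) * PowerSeries.X) * (PowerSeries.mk fun n => (c : ℚ) ^ n) = 1 := by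
  ext n
  rw [sub_mul, one_mul, map_sub, mul_assoc, PowerSeries.coeff_C_mul]
  cases n with
  | zero => simp
  | succ n => simp [PowerSeries.coeff_succ_X_mul, PowerSeries.coeff_mk, pow_succ, mul_comm]

private lemma prod_geom_inv (m : ℕ) (d : Fin m → ℕ) :
    (∏ i, (1 - PowerSeries.C (d i : ℚ) * PowerSeries.X)) *
      (∏ i, PowerSeries.mk fun n => (d i : ℚ) ^ n) = 1 := by
  rw [← Finset.prod_mul_distrib]
  exact Finset.prod_eq_one fun i _ => geom_inv (d i)

private lemma sumA (y : ℚ) (E : PowerSeries ℚ) (p : ℕ) :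
    ∑ j ∈ range (p + 1),
        PowerSeries.C ((-1 : ℚ) ^ j *
          PowerSeries.coeff j ((1 + PowerSeries.C y * PowerSeries.X) * E)) *
          PowerSeries.X ^ j =
      (1 - PowerSeries.C y * PowerSeries.X) *
          ∑ j ∈ range (p + 1),
            PowerSeries.C ((-1 : ℚ) ^ j * PowerSeries.coeff j E) * PowerSeries.X ^ j +
        PowerSeries.C ((-1 : ℚ) ^ p * (y * PowerSeries.coeff p E)) *
          PowerSeries.X ^ (p + 1) := by
  have hc : ∀ j : ℕ, PowerSeries.coeff j ((1 + PowerSeries.C y * PowerSeries.X) * E) =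
      PowerSeries.coeff j E + y * PowerSeries.coeff j (PowerSeries.X * E) := by
    intro j
    rw [add_mul, one_mul, map_add, mul_assoc, PowerSeries.coeff_C_mul]
  induction p with
  | zero =>
    rw [Finset.sum_range_one, Finset.sum_range_one, hc]
    have h0 : PowerSeries.coeff 0 (PowerSeries.X * E) = 0 := by
      simp [PowerSeries.coeff_zero_eq_constantCoeff]
    rw [h0]
    simp only [map_mul, map_add, map_one, map_zero]
    ring
  | succ p ih =>
    rw [Finset.sum_range_succ, Finset.sum_range_succ (f := fun j =>
      PowerSeries.C ((-1 : ℚ) ^ j * PowerSeries.coeff j E) * PowerSeries.X ^ j), ih,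
      hc (p + 1), PowerSeries.coeff_succ_X_mul]
    simp only [map_mul, map_add, map_pow, map_neg, map_one]
    ring

private lemma key : ∀ (m : ℕ) (d : Fin m → ℕ) (p : ℕ),
    ∃ S : PowerSeries ℚ, NNC S ∧
      ((-1 : PowerSeries ℚ)) ^ (p + 1) * PowerSeries.X ^ (p + 1) * S *
          (∏ i, (1 - PowerSeries.C (d i : ℚ) * PowerSeries.X)) =
        (∏ i, (1 - PowerSeries.C (d i : ℚ) * PowerSeries.X)) -
          ∑ j ∈ range (p + 1),
            (PowerSeries.C ((-1 : ℚ) ^ j *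
              (PowerSeries.coeff j (∏ i, (1 + PowerSeries.C (d i : ℚ) * PowerSeries.X))))) *
              PowerSeries.X ^ j := by
  intro m
  induction m with
  | zero =>
    intro d p
    refine ⟨0, fun n => by simpa using zero_mem _, ?_⟩
    simp only [Fin.prod_univ_zero, PowerSeries.coeff_one, mul_ite, mul_one, mul_zero, zero_mul,
      apply_ite (PowerSeries.C (R := ℚ)), map_zero, ite_mul]
    rw [eq_comm, sub_eq_zero, Finset.sum_ite_eq' (range (p + 1)) 0
      (fun j => PowerSeries.C ((-1:ℚ) ^ j) * PowerSeries.X ^ j)]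
    simp
  | succ m ih =>
    intro d p
    obtain ⟨S, hS, hEq⟩ := ih (fun i => d i.succ) p
    have hβ : ∃ k : ℕ, (k : ℚ) = PowerSeries.coeff p
        (∏ i : Fin m, (1 + PowerSeries.C (d i.succ : ℚ) * PowerSeries.X)) := by
      obtain ⟨k, hk⟩ := NNC_prod (Finset.univ : Finset (Fin m))
        (fun i => 1 + PowerSeries.C (d i.succ : ℚ) * PowerSeries.X)
        (fun i _ => NNC_onePlus (d i.succ)) p
      exact ⟨k, hk⟩
    obtain ⟨k, hk⟩ := hβ
    refine ⟨S + PowerSeries.C ((d 0 : ℚ) * PowerSeries.coeff p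
        (∏ i : Fin m, (1 + PowerSeries.C (d i.succ : ℚ) * PowerSeries.X))) *
        ∏ i : Fin (m + 1), PowerSeries.mk fun n => (d i : ℚ) ^ n, ?_, ?_⟩
    · refine NNC_add hS (NNC_mul ?_ (NNC_prod _ _ fun i _ => NNC_geom (d i)))
      have h2 : (d 0 : ℚ) * PowerSeries.coeff p
          (∏ i : Fin m, (1 + PowerSeries.C (d i.succ : ℚ) * PowerSeries.X))
          = ((d 0 * k : ℕ) : ℚ) := by push_cast; rw [hk]
      rw [h2]; exact NNC_C _
    · have hginv := prod_geom_inv (m + 1) d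
      rw [Fin.prod_univ_succ (fun i => 1 - PowerSeries.C (d i : ℚ) * PowerSeries.X)] at hginv
      rw [Fin.prod_univ_succ (fun i => 1 - PowerSeries.C (d i : ℚ) * PowerSeries.X),
        Fin.prod_univ_succ (fun i => 1 + PowerSeries.C (d i : ℚ) * PowerSeries.X),
        sumA (d 0 : ℚ) (∏ i : Fin m, (1 + PowerSeries.C (d i.succ : ℚ) * PowerSeries.X)) p]
      simp only [map_mul, map_pow, map_neg, map_one] at hEq hginv ⊢
      linear_combination (1 - PowerSeries.C (d 0 : ℚ) * PowerSeries.X) * hEq +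
        ((-1 : PowerSeries ℚ)) ^ (p + 1) * PowerSeries.X ^ (p + 1) *
          (PowerSeries.C (d 0 : ℚ) * PowerSeries.C (PowerSeries.coeff p
            (∏ i : Fin m, (1 + PowerSeries.C (d i.succ : ℚ) * PowerSeries.X)))) * hginv

open PowerSeries Finset in
/-- Let `d₂, …, d_ℓ` be positive integers (here `d : Fin m → ℕ` with
`m = ℓ - 1`) and define `β_j` by `Π_i (1 + d_i t) = Σ_j β_j t^j`.  Then for
`0 ≤ p ≤ ℓ - 1`, the power series
`(-1/t)^{p+1}·{1 - [Σ_{j=0}^p (-1)^j β_j t^j] / Π_i (1 - d_i t)}`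
has nonnegative integer coefficients; i.e. there is a power series `S` whose
coefficients are all natural numbers with
`(-1)^{p+1} t^{p+1} S · Π_i (1 - d_i t) = Π_i (1 - d_i t) - Σ_{j=0}^p (-1)^j β_j t^j`. -/
theorem stmt_17 (m : ℕ) (d : Fin m → ℕ) (hd : ∀ i, 0 < d i) (p : ℕ) (hp : p ≤ m) :
    ∃ S : PowerSeries ℚ,
      (∀ n : ℕ, ∃ k : ℕ, PowerSeries.coeff n S = (k : ℚ)) ∧
      ((-1 : PowerSeries ℚ)) ^ (p + 1) * PowerSeries.X ^ (p + 1) * S *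
          (∏ i, (1 - PowerSeries.C (d i : ℚ) * PowerSeries.X)) =
        (∏ i, (1 - PowerSeries.C (d i : ℚ) * PowerSeries.X)) -
          ∑ j ∈ range (p + 1),
            (PowerSeries.C ((-1 : ℚ) ^ j *
              (PowerSeries.coeff j (∏ i, (1 + PowerSeries.C (d i : ℚ) * PowerSeries.X))))) *
              PowerSeries.X ^ j := by
  obtain ⟨S, hS, hEq⟩ := key m d p
  exact ⟨S, fun n => by obtain ⟨k, hk⟩ := hS n; exact ⟨k, hk.symm⟩, hEq⟩
end
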